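/- arXiv:1701.04021 — 2 statements merged into one kernel-verified Lean document; each statement's English description precedes it below -/
import Mathlib

section
/- Consider an algorithm maintaining estimates f̂^t with the following transition rules: (i) when item x arrives with weight w at time t, f̂^t_x = f̂^{t−1}_x + w and f̂^t_y = f̂^{t−1}_y for y ≠ x; (ii) during a cleanup step, any item x whose estimate satisfies f̂^{t−1}_x ≤ q may have its estimate reset to f̂^t_x = q, where q satisfies q ≤ R_t·ε. If initially f̂^0_x = 0 = f^0_x for all x, then at every time t and for every x: f^t_x ≤ f̂^t_x ≤ f^t_x + R_t·ε. -/
theorem stmt_11 {α : Type*} (ε : ℝ) (hε : 0 < ε) (hε1 : ε ≤ 1)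
    (f fhat : ℕ → α → ℝ) (R : ℕ → ℝ)
    (hinit : (∀ x, f 0 x = 0) ∧ (∀ x, fhat 0 x = 0) ∧ R 0 = 0)
    (hstep : ∀ t,
      -- (i) an arrival of some item `x` with weight `w`
      (∃ x w, 0 ≤ w ∧
        f (t + 1) x = f t x + w ∧ (∀ y, y ≠ x → f (t + 1) y = f t y) ∧
        fhat (t + 1) x = fhat t x + w ∧ (∀ y, y ≠ x → fhat (t + 1) y = fhat t y) ∧
        R (t + 1) = R t + w) ∨
      -- (ii) a cleanup step with quantile `q ≤ R_{t+1}·ε`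
      (∃ q, q ≤ R (t + 1) * ε ∧ R (t + 1) = R t ∧
        (∀ y, f (t + 1) y = f t y) ∧
        (∀ y, fhat (t + 1) y = fhat t y ∨
              (fhat t y ≤ q ∧ fhat (t + 1) y = q)))) :
    ∀ t x, f t x ≤ fhat t x ∧ fhat t x ≤ f t x + R t * ε := by
  obtain ⟨hf0, hfhat0, hR0⟩ := hinit
  have key : ∀ t, (∀ x, 0 ≤ f t x) ∧
      (∀ x, f t x ≤ fhat t x ∧ fhat t x ≤ f t x + R t * ε) := by
    intro t
    induction t with
    | zero =>
      refine ⟨fun x => (hf0 x).ge, fun x => ?_⟩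
      rw [hf0, hfhat0, hR0]; simp
    | succ t ih =>
      obtain ⟨ihpos, ihb⟩ := ih
      rcases hstep t with ⟨x, w, hw, hfx, hfy, hhx, hhy, hR⟩ |
        ⟨q, hq, hR, hfeq, hhat⟩
      · have hRle : R t * ε ≤ R (t+1) * ε := by
          rw [hR]; nlinarith
        constructor
        · intro y
          by_cases hxy : y = x
          · subst hxy; rw [hfx]; have := ihpos y; linarith
          · rw [hfy y hxy]; exact ihpos y
        · intro y
          by_cases hxy : y = x
          · subst hxy
            obtain ⟨h1, h2⟩ := ihb y
            rw [hfx, hhx]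
            constructor <;> linarith
          · rw [hfy y hxy, hhy y hxy]
            obtain ⟨h1, h2⟩ := ihb y
            exact ⟨h1, by linarith⟩
      · constructor
        · intro y; rw [hfeq]; exact ihpos y
        · intro y
          obtain ⟨h1, h2⟩ := ihb y
          rcases hhat y with heq | ⟨hle, heq⟩
          · rw [hfeq, heq, hR]; exact ⟨h1, h2⟩
          · rw [hfeq, heq, hR]
            constructor
            · linarith
            · have := ihpos y; rw [hR] at hq; linarith
  exact fun t x => (key t).2 x
end

section
/- Let estimates satisfy f_x ≤ f̂_x ≤ f_x + R·ε with ε < θ, and let S = {x tracked : f̂_x ≥ R·θ} be computed by scanning tables that contain every flow whose estimate exceeds q, where q ≤ R·ε < R·θ. Then S contains every flow with f_x > R·θ and excludes every flow with f_x < R·(θ−ε); moreover every flow with f_x > R·θ is necessarily tracked (present in a table). -/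
theorem stmt_15 {α : Type*} [DecidableEq α] (f fhat : α → ℝ) (R ε θ q : ℝ)
    (hε : 0 < ε) (hεθ : ε < θ)
    (hest : ∀ x, f x ≤ fhat x ∧ fhat x ≤ f x + R * ε)
    (tracked : Finset α)
    (huntracked : ∀ x ∉ tracked, fhat x = q)
    (hq : q ≤ R * ε) (hq' : R * ε < R * θ)
    (S : Finset α) (hS : S = tracked.filter (fun x => R * θ ≤ fhat x)) :
    (∀ x, R * θ < f x → x ∈ S) ∧
    (∀ x, f x < R * (θ - ε) → x ∉ S) ∧
    (∀ x, R * θ < f x → x ∈ tracked) := by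
  have htr : ∀ x, R * θ < f x → x ∈ tracked := by
    intro x hx
    by_contra h
    have := huntracked x h
    have h1 := (hest x).1
    linarith
  refine ⟨?_, ?_, htr⟩
  · intro x hx
    rw [hS, Finset.mem_filter]
    exact ⟨htr x hx, le_trans (le_of_lt hx) (hest x).1⟩
  · intro x hx
    rw [hS, Finset.mem_filter]
    rintro ⟨-, h2⟩
    have := (hest x).2
    have : R * (θ - ε) = R * θ - R * ε := by ring
    linarith [(hest x).2]
end
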